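/- arXiv:2308.00863 — 3 statements merged into one kernel-verified Lean document; each statement's English description precedes it below -/
import Mathlib

section
/- Suppose A is a unital C*-algebra, τ is a state on A, Γ is a finite simple graph with vertex set V, and {A_v}_{v∈V} is a Γ-right-angled collection of unital *-subalgebras with respect to τ such that A is generated as a C*-algebra by ⋃_{v∈V} A_v. Then the state τ is uniquely determined by its restrictions τ|_{A_v}: any two states on A that are Γ-right-angled for {A_v} and agree on each A_v are equal. -/
/-!
Statement 5 (Proposition: a state is determined by its restrictions to a generating
`Γ`-right-angled family of ∗-subalgebras).
-/

open scoped ComplexOrder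

noncomputable section

set_option linter.unusedSectionVars false

/-- A finite sequence of vertices is `Γ`-reduced if whenever `v_j = v_k` for `j < k`,
there is `j < l < k` with `v_l ∉ N(v_j) = N(v_k)`. -/
def GammaReduced {V : Type*} (Γ : SimpleGraph V) {m : ℕ} (vs : Fin m → V) : Prop :=
  ∀ j k : Fin m, j < k → vs j = vs k →
    ∃ l : Fin m, j < l ∧ l < k ∧ ¬ Γ.Adj (vs j) (vs l)

/-- A state on a unital C*-algebra: a positive linear functional with `τ(1) = 1`. -/
def IsState {A : Type*} [NormedRing A] [StarRing A] [NormedAlgebra ℂ A]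
    (τ : A →ₗ[ℂ] ℂ) : Prop :=
  τ 1 = 1 ∧ ∀ a : A, 0 ≤ τ (star a * a)

/-- A collection of unital ∗-subalgebras `{A_v}_{v ∈ V}` is `Γ`-right-angled with respect
to a state `τ`: adjacent subalgebras commute, and products of `τ`-centered elements along
`Γ`-reduced sequences of vertices are `τ`-centered. -/
def GammaRightAngled {V : Type*} (Γ : SimpleGraph V)
    {A : Type*} [NormedRing A] [StarRing A] [NormedAlgebra ℂ A] [StarModule ℂ A]
    (SA : V → StarSubalgebra ℂ A) (τ : A →ₗ[ℂ] ℂ) : Prop :=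
  (∀ v w, Γ.Adj v w → ∀ a ∈ SA v, ∀ b ∈ SA w, a * b = b * a) ∧
  (∀ (m : ℕ) (vs : Fin m → V), GammaReduced Γ vs →
    ∀ a : Fin m → A, (∀ j, a j ∈ SA (vs j)) → (∀ j, τ (a j) = 0) →
      τ (List.ofFn a).prod = 0)

lemma comm_list_prod {A : Type*} [Monoid A] (a : A) (l : List A)
    (h : ∀ b ∈ l, a * b = b * a) : a * l.prod = l.prod * a := by
  induction l with
  | nil => simp
  | cons b t ih =>
    rw [List.prod_cons, ← mul_assoc, h b List.mem_cons_self, mul_assoc,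
      ih (fun c hc => h c (List.mem_cons_of_mem _ hc)), mul_assoc]

lemma list_split {α : Type*} (u : List α) (j k : ℕ) (hjk : j < k) (hk : k < u.length) :
    ∃ x y z : List α,
      u = x ++ u[j]'(hjk.trans hk) :: (y ++ u[k]'hk :: z) ∧
      u.length = x.length + y.length + z.length + 2 ∧
      ∀ r ∈ y, ∃ (l : ℕ) (hl : l < u.length), j < l ∧ l < k ∧ r = u[l]'hl := by
  have hj : j < u.length := hjk.trans hk
  refine ⟨u.take j, (u.drop (j+1)).take (k - (j+1)), u.drop (k+1), ?_, ?_, ?_⟩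
  · conv_lhs => rw [← List.take_append_drop j u]
    congr 1
    rw [List.drop_eq_getElem_cons hj]
    congr 1
    conv_lhs => rw [← List.take_append_drop (k - (j+1)) (u.drop (j+1))]
    congr 1
    rw [List.drop_drop]
    have : j + 1 + (k - (j+1)) = k := by omega
    rw [this, List.drop_eq_getElem_cons hk]
  · have h1 : (u.take j).length = j := by
      rw [List.length_take]; omega
    have h2 : ((u.drop (j+1)).take (k - (j+1))).length = k - (j+1) := by
      rw [List.length_take, List.length_drop]; omega
    have h3 : (u.drop (k+1)).length = u.length - (k+1) := by rw [List.length_drop]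
    omega
  · intro r hr
    obtain ⟨i, hi, hri⟩ := List.getElem_of_mem hr
    have hi' : i < k - (j+1) := by
      have := hi
      rw [List.length_take, List.length_drop] at this
      omega
    have hl : j + 1 + i < u.length := by omega
    refine ⟨j + 1 + i, hl, by omega, by omega, ?_⟩
    rw [← hri]
    rw [List.getElem_take, List.getElem_drop]

section Key

variable {V : Type*} (Γ : SimpleGraph V)
variable {A : Type*} [NormedRing A] [StarRing A] [NormedAlgebra ℂ A] [StarModule ℂ A]
variable (SA : V → StarSubalgebra ℂ A)

lemma key_lemma (τ τ' : A →ₗ[ℂ] ℂ) (hτ1 : τ 1 = 1) (hτ'1 : τ' 1 = 1)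
    (hcomm : ∀ v w, Γ.Adj v w → ∀ a ∈ SA v, ∀ b ∈ SA w, a * b = b * a)
    (hred : ∀ (m : ℕ) (vs : Fin m → V), GammaReduced Γ vs →
      ∀ a : Fin m → A, (∀ j, a j ∈ SA (vs j)) → (∀ j, τ (a j) = 0) →
        τ (List.ofFn a).prod = 0)
    (hred' : ∀ (m : ℕ) (vs : Fin m → V), GammaReduced Γ vs →
      ∀ a : Fin m → A, (∀ j, a j ∈ SA (vs j)) → (∀ j, τ' (a j) = 0) →
        τ' (List.ofFn a).prod = 0)
    (hagree : ∀ v : V, ∀ a ∈ SA v, τ a = τ' a) :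
    ∀ (n : ℕ) (w : List (A × V)), w.length ≤ n → (∀ p ∈ w, p.1 ∈ SA p.2) →
      τ (w.map Prod.fst).prod = τ' (w.map Prod.fst).prod := by
  intro n
  induction n with
  | zero =>
    intro w hw _
    rw [List.length_eq_zero_iff.mp (Nat.le_zero.mp hw)]
    simp [hτ1, hτ'1]
  | succ n IH =>
    have Hcent : ∀ (u : List (A × V)), u.length ≤ n + 1 → (∀ p ∈ u, p.1 ∈ SA p.2) →
        (∀ p ∈ u, τ p.1 = 0) →
        τ (u.map Prod.fst).prod = τ' (u.map Prod.fst).prod := by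
      intro u hlen hmem hcent
      set vs : Fin u.length → V := fun i => (u.get i).2 with hvs
      set a : Fin u.length → A := fun i => (u.get i).1 with ha
      have hmap : u.map Prod.fst = List.ofFn a := by
        apply List.ext_getElem
        · simp
        · intro i h1 h2
          simp [ha, List.get_eq_getElem]
      have hamem : ∀ i, a i ∈ SA (vs i) := fun i =>
        hmem (u.get i) (List.get_mem u i)
      by_cases hr : GammaReduced Γ vs
      · have h1 : τ (List.ofFn a).prod = 0 :=
          hred u.length vs hr a hamem (fun i => hcent (u.get i) (List.get_mem u i))
        have h2 : τ' (List.ofFn a).prod = 0 := by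
          refine hred' u.length vs hr a hamem (fun i => ?_)
          rw [← hagree (vs i) (a i) (hamem i)]
          exact hcent (u.get i) (List.get_mem u i)
        rw [hmap, h1, h2]
      · rw [GammaReduced] at hr
        push_neg at hr
        obtain ⟨j, k, hjk, hvjk, hadj⟩ := hr
        have hjk' : (j : ℕ) < (k : ℕ) := hjk
        obtain ⟨x, y, z, hdecomp, hlen2, hy⟩ := list_split u j k hjk' k.isLt
        set p : A × V := u[(j:ℕ)]'(hjk'.trans k.isLt) with hp
        set q : A × V := u[(k:ℕ)]'k.isLt with hq
        have hpmem : p ∈ u := List.getElem_mem _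
        have hqmem : q ∈ u := List.getElem_mem _
        have hpv : p.2 = vs j := by simp [hvs, List.get_eq_getElem, hp]
        have hqv : q.2 = vs k := by simp [hvs, List.get_eq_getElem, hq]
        have hxu : ∀ r ∈ x, r ∈ u := by
          intro r hr'; rw [hdecomp]; simp [hr']
        have hyu : ∀ r ∈ y, r ∈ u := by
          intro r hr'; rw [hdecomp]; simp [hr']
        have hzu : ∀ r ∈ z, r ∈ u := by
          intro r hr'; rw [hdecomp]; simp [hr']
        set w' : List (A × V) := x ++ y ++ (p.1 * q.1, p.2) :: z with hw'
        have hw'mem : ∀ r ∈ w', r.1 ∈ SA r.2 := by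
          intro r hr'
          rw [hw'] at hr'
          simp only [List.mem_append, List.mem_cons] at hr'
          rcases hr' with (hx' | hy') | hpq | hz'
          · exact hmem r (hxu r hx')
          · exact hmem r (hyu r hy')
          · rw [hpq]
            refine mul_mem (hmem p hpmem) ?_
            have : SA q.2 = SA p.2 := by rw [hpv, hqv, hvjk]
            rw [← this]
            exact hmem q hqmem
          · exact hmem r (hzu r hz')
        have hw'len : w'.length ≤ n := by
          rw [hw']
          simp only [List.length_append, List.length_cons]
          omega
        have hcommY : p.1 * (y.map Prod.fst).prod = (y.map Prod.fst).prod * p.1 := by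
          apply comm_list_prod
          intro b hb
          obtain ⟨r, hrmem, hrb⟩ := List.mem_map.mp hb
          obtain ⟨l, hl, hjl, hlk, hrl⟩ := hy r hrmem
          have hadjl : Γ.Adj (vs j) (vs ⟨l, hl⟩) := hadj ⟨l, hl⟩ hjl hlk
          have hrv : r.2 = vs ⟨l, hl⟩ := by
            rw [hrl]; simp [hvs, List.get_eq_getElem]
          refine hcomm (vs j) (vs ⟨l, hl⟩) hadjl p.1 ?_ b ?_
          · rw [← hpv]; exact hmem p hpmem
          · rw [← hrb, ← hrv]; exact hmem r (hyu r hrmem)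
        have hprodeq : (u.map Prod.fst).prod = (w'.map Prod.fst).prod := by
          conv_lhs => rw [hdecomp]
          rw [hw']
          simp only [List.map_append, List.map_cons, List.prod_append, List.prod_cons]
          rw [mul_assoc]
          congr 1
          rw [← mul_assoc p.1, hcommY, mul_assoc, mul_assoc]
        rw [hprodeq]
        exact IH w' hw'len hw'mem
    have Hcenter : ∀ (t s : List (A × V)), s.length + t.length ≤ n + 1 →
        (∀ r ∈ s, r.1 ∈ SA r.2) → (∀ r ∈ t, r.1 ∈ SA r.2) → (∀ r ∈ s, τ r.1 = 0) →
        τ ((s ++ t).map Prod.fst).prod = τ' ((s ++ t).map Prod.fst).prod := by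
      intro t
      induction t with
      | nil =>
        intro s hlen hs _ hc
        rw [List.append_nil]
        exact Hcent s (by simpa using hlen) hs hc
      | cons p t' IHt =>
        intro s hlen hs ht hc
        have hp : p.1 ∈ SA p.2 := ht p List.mem_cons_self
        set c : A := p.1 - τ p.1 • 1 with hcdef
        have hcmem : c ∈ SA p.2 :=
          sub_mem hp (SMulMemClass.smul_mem _ (one_mem _))
        have hτc : τ c = 0 := by
          simp [hcdef, map_sub, map_smul, hτ1]
        have split : ∀ (σ : A →ₗ[ℂ] ℂ),
            σ ((s ++ p :: t').map Prod.fst).prod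
              = σ (((s ++ [(c, p.2)]) ++ t').map Prod.fst).prod
                + τ p.1 * σ ((s ++ t').map Prod.fst).prod := by
          intro σ
          have hpc : p.1 = c + τ p.1 • 1 := by simp [hcdef]
          have : ((s ++ p :: t').map Prod.fst).prod
              = (((s ++ [(c, p.2)]) ++ t').map Prod.fst).prod
                + τ p.1 • ((s ++ t').map Prod.fst).prod := by
            simp only [List.map_append, List.map_cons, List.map_nil, List.prod_append,
              List.prod_cons, List.prod_nil, mul_one]
            conv_lhs => rw [hpc]
            rw [add_mul, smul_mul_assoc, one_mul, mul_add, mul_smul_comm, mul_assoc]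
          rw [this, map_add, map_smul, smul_eq_mul]
        rw [split τ, split τ']
        have h1 : τ (((s ++ [(c, p.2)]) ++ t').map Prod.fst).prod
            = τ' (((s ++ [(c, p.2)]) ++ t').map Prod.fst).prod := by
          apply IHt
          · simp only [List.length_append, List.length_cons, List.length_nil] at hlen ⊢
            omega
          · intro r hr'
            rcases List.mem_append.mp hr' with h | h
            · exact hs r h
            · rw [List.mem_singleton.mp h]; exact hcmem
          · intro r hr'
            exact ht r (List.mem_cons_of_mem _ hr')
          · intro r hr'
            rcases List.mem_append.mp hr' with h | h
            · exact hc r h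
            · rw [List.mem_singleton.mp h]; exact hτc
        have h2 : τ ((s ++ t').map Prod.fst).prod = τ' ((s ++ t').map Prod.fst).prod := by
          apply IH
          · simp only [List.length_append, List.length_cons] at hlen ⊢
            omega
          · intro r hr'
            rcases List.mem_append.mp hr' with h | h
            · exact hs r h
            · exact ht r (List.mem_cons_of_mem _ h)
        rw [h1, h2]
    intro w hw hmem
    have := Hcenter w [] (by simpa using hw) (by simp) hmem (by simp)
    simpa using this

end Key

section StateFacts

variable {A : Type*} [NormedRing A] [StarRing A] [NormedAlgebra ℂ A] [StarModule ℂ A]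
variable (τ : A →ₗ[ℂ] ℂ)

lemma state_real (hτ : IsState τ) {x : A} (hx : IsSelfAdjoint x) :
    (starRingEnd ℂ) (τ x) = τ x := by
  have h1 := hτ.2 (1 + x)
  have h2 := hτ.2 (1 - x)
  have c1 : (starRingEnd ℂ) (τ (star (1 + x) * (1 + x))) = τ (star (1 + x) * (1 + x)) :=
    Complex.conj_eq_iff_im.mpr (Complex.le_def.mp h1).2.symm
  have c2 : (starRingEnd ℂ) (τ (star (1 - x) * (1 - x))) = τ (star (1 - x) * (1 - x)) :=
    Complex.conj_eq_iff_im.mpr (Complex.le_def.mp h2).2.symm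
  have hkey : τ (star (1 + x) * (1 + x)) - τ (star (1 - x) * (1 - x)) = 4 * τ x := by
    rw [← map_sub]
    have : star (1 + x) * (1 + x) - star (1 - x) * (1 - x) = (4 : ℂ) • x := by
      rw [star_add, star_sub, star_one, hx.star_eq]
      have h4 : (4 : ℂ) • x = x + x + x + x := by
        rw [show (4 : ℂ) = 1 + 1 + 1 + 1 by norm_num]
        simp [add_smul]
      rw [h4]
      noncomm_ring
    rw [this, map_smul, smul_eq_mul]
  have := congrArg (starRingEnd ℂ) hkey
  rw [map_sub, c1, c2, hkey, map_mul] at this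
  have h4 : ((starRingEnd ℂ) 4 : ℂ) = 4 := by
    rw [show (4:ℂ) = ((4:ℝ):ℂ) by norm_num, Complex.conj_ofReal]
  rw [h4] at this
  exact (mul_left_cancel₀ (by norm_num : (4:ℂ) ≠ 0) this).symm

lemma state_star (hτ : IsState τ) (a : A) :
    τ (star a) = (starRingEnd ℂ) (τ a) := by
  have hx : IsSelfAdjoint (a + star a) := by
    rw [IsSelfAdjoint, star_add, star_star, add_comm]
  have hy : IsSelfAdjoint (Complex.I • (a - star a)) := by
    rw [IsSelfAdjoint, star_smul, star_sub, star_star, Complex.star_def, Complex.conj_I,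
      neg_smul, smul_sub, smul_sub, neg_sub]
  have h2a : (2 : ℂ) • star a = (a + star a) + Complex.I • (Complex.I • (a - star a)) := by
    rw [smul_smul, Complex.I_mul_I, neg_smul, one_smul, two_smul]
    abel
  have h2b : (2 : ℂ) • a = (a + star a) - Complex.I • (Complex.I • (a - star a)) := by
    rw [smul_smul, Complex.I_mul_I, neg_smul, one_smul, two_smul]
    abel
  have e1 : (2 : ℂ) * τ (star a)
      = τ (a + star a) + Complex.I * τ (Complex.I • (a - star a)) := by
    rw [← smul_eq_mul, ← map_smul, h2a, map_add, map_smul, smul_eq_mul]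
  have e2 : (2 : ℂ) * (starRingEnd ℂ) (τ a)
      = τ (a + star a) + Complex.I * τ (Complex.I • (a - star a)) := by
    have : (2 : ℂ) * (starRingEnd ℂ) (τ a) = (starRingEnd ℂ) ((2 : ℂ) * τ a) := by
      rw [map_mul, show ((starRingEnd ℂ) 2 : ℂ) = 2 by
        rw [show (2:ℂ) = ((2:ℝ):ℂ) by norm_num, Complex.conj_ofReal]]
    rw [this, ← smul_eq_mul, ← map_smul, h2b, map_sub, map_smul, smul_eq_mul, map_sub,
      map_mul, Complex.conj_I, state_real τ hτ hx, state_real τ hτ hy]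
    ring
  have := e1.trans e2.symm
  exact mul_left_cancel₀ (by norm_num : (2:ℂ) ≠ 0) this

lemma state_cauchy_schwarz (hτ : IsState τ) (a : A) :
    ‖τ a‖ ^ 2 ≤ (τ (star a * a)).re := by
  have h0 := hτ.2 (a - τ a • 1)
  have hexp : τ (star (a - τ a • 1) * (a - τ a • 1))
      = τ (star a * a) - (starRingEnd ℂ) (τ a) * τ a := by
    rw [star_sub, star_smul, star_one, sub_mul, mul_sub, mul_sub]
    simp only [smul_mul_assoc, mul_smul_comm, one_mul, mul_one, map_sub, map_smul,
      smul_eq_mul, Complex.star_def]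
    rw [state_star τ hτ a, hτ.1]
    ring
  rw [hexp] at h0
  have him := (Complex.le_def.mp h0).1
  simp only [Complex.zero_re, Complex.sub_re] at him
  have hre : ((starRingEnd ℂ) (τ a) * τ a).re = ‖τ a‖ ^ 2 := by
    rw [mul_comm, Complex.mul_conj, Complex.ofReal_re, Complex.normSq_eq_norm_sq]
  rw [hre] at him
  linarith

end StateFacts

section BoundFacts

variable {A : Type*} [NormedRing A] [StarRing A] [CStarRing A] [NormedAlgebra ℂ A]
    [StarModule ℂ A] [CompleteSpace A]
variable (τ : A →ₗ[ℂ] ℂ)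

lemma state_bound (hτ : IsState τ) (a : A) : ‖τ a‖ ≤ ‖a‖ := by
  haveI : Nontrivial A := by
    refine ⟨1, 0, fun h => ?_⟩
    have := hτ.1
    rw [h, map_zero] at this
    exact one_ne_zero this.symm
  letI : CStarAlgebra A :=
    { ‹NormedRing A›, ‹StarRing A›, ‹CStarRing A›, ‹NormedAlgebra ℂ A›,
      ‹StarModule ℂ A› with complete := CompleteSpace.complete }
  set b : A := star a * a with hb
  have hbsa : IsSelfAdjoint b := IsSelfAdjoint.star_mul_self a
  set x : A := algebraMap ℝ A ‖b‖ - b with hx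
  have hxsa : IsSelfAdjoint x := by
    refine IsSelfAdjoint.sub ?_ hbsa
    exact IsSelfAdjoint.algebraMap A (by simp [IsSelfAdjoint])
  have hspec : ∀ r ∈ spectrum ℝ x, 0 ≤ r := by
    intro r hr
    rw [hx, ← spectrum.singleton_sub_eq] at hr
    obtain ⟨s, hs, t, ht, hst⟩ := Set.mem_sub.mp hr
    rw [Set.mem_singleton_iff] at hs
    subst hs
    have hnt : ‖t‖ ≤ ‖b‖ := spectrum.norm_le_norm_of_mem ht
    rw [Real.norm_eq_abs] at hnt
    rw [← hst]
    cases abs_le.mp hnt with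
    | intro h1 h2 => linarith
  have hres : SpectrumRestricts x ContinuousMap.realToNNReal :=
    SpectrumRestricts.nnreal_iff.mpr hspec
  obtain ⟨c, hc, -, hc2⟩ :=
    CFC.exists_sqrt_of_isSelfAdjoint_of_quasispectrumRestricts hxsa
      (quasispectrumRestricts_iff_spectrumRestricts.mpr hres)
  have hτx : 0 ≤ τ x := by
    have : x = star c * c := by rw [← hc2, hc.star_eq]
    rw [this]; exact hτ.2 c
  have halg : τ (algebraMap ℝ A ‖b‖) = (‖b‖ : ℂ) := by
    rw [Algebra.algebraMap_eq_smul_one, ← algebraMap_smul ℂ (‖b‖ : ℝ) (1 : A),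
      map_smul, hτ.1, smul_eq_mul, mul_one]
    rfl
  have hre : (τ b).re ≤ ‖b‖ := by
    rw [hx] at hτx
    rw [map_sub, halg] at hτx
    have := (Complex.le_def.mp hτx).1
    simp only [Complex.zero_re, Complex.sub_re, Complex.ofReal_re] at this
    linarith
  have hcs := state_cauchy_schwarz τ hτ a
  have hnb : ‖b‖ ≤ ‖a‖ ^ 2 := by
    rw [hb, sq]
    exact le_of_eq (CStarRing.norm_star_mul_self)
  have h2 : ‖τ a‖ ^ 2 ≤ ‖a‖ ^ 2 := le_trans hcs (le_trans hre hnb)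
  have := Real.sqrt_le_sqrt h2
  rwa [Real.sqrt_sq (norm_nonneg _), Real.sqrt_sq (norm_nonneg _)] at this

end BoundFacts


/-- **Proposition (Magee–Thomas).** Let `A` be a unital C*-algebra generated by a
`Γ`-right-angled collection of unital ∗-subalgebras `{A_v}`.  Then any two states that
are `Γ`-right-angled for `{A_v}` and agree on each `A_v` are equal. -/
theorem state_determined_by_restrictions
    {V : Type*} (Γ : SimpleGraph V)
    {A : Type*} [NormedRing A] [StarRing A] [CStarRing A] [NormedAlgebra ℂ A]
    [StarModule ℂ A] [CompleteSpace A]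
    (SA : V → StarSubalgebra ℂ A)
    (hgen : (StarAlgebra.adjoin ℂ (⋃ v : V, (SA v : Set A))).topologicalClosure = ⊤)
    (τ τ' : A →ₗ[ℂ] ℂ) (hτ : IsState τ) (hτ' : IsState τ')
    (hra : GammaRightAngled Γ SA τ) (hra' : GammaRightAngled Γ SA τ')
    (hagree : ∀ v : V, ∀ a ∈ SA v, τ a = τ' a) :
    τ = τ' := by
  set s : Set A := ⋃ v : V, (SA v : Set A) with hs
  -- Step 1: agreement on the monoid closure
  have hkey := key_lemma Γ SA τ τ' hτ.1 hτ'.1 hra.1 hra.2 hra'.2 hagree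
  have hmon : ∀ x ∈ Submonoid.closure s, τ x = τ' x := by
    intro x hx
    obtain ⟨l, hl, rfl⟩ := Submonoid.exists_list_of_mem_closure hx
    have hex : ∀ y ∈ l, ∃ v, y ∈ SA v := by
      intro y hy
      simpa [hs] using hl y hy
    choose f hf using hex
    set w : List (A × V) := l.attach.map (fun yp => (yp.1, f yp.1 yp.2)) with hw
    have hmap : w.map Prod.fst = l := by
      rw [hw, List.map_map]
      have : (Prod.fst ∘ fun yp : {y // y ∈ l} => (yp.1, f yp.1 yp.2))
          = fun yp : {y // y ∈ l} => yp.1 := rfl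
      rw [this, List.attach_map_subtype_val]
    have hwmem : ∀ p ∈ w, p.1 ∈ SA p.2 := by
      intro p hp
      rw [hw] at hp
      obtain ⟨yp, _, rfl⟩ := List.mem_map.mp hp
      exact hf yp.1 yp.2
    have := hkey w.length w le_rfl hwmem
    rwa [hmap] at this
  -- Step 2: agreement on the star subalgebra generated by the union
  have hadj : ∀ x ∈ StarAlgebra.adjoin ℂ s, τ x = τ' x := by
    have hstar_s : s ∪ star s = s := by
      apply Set.union_eq_self_of_subset_right
      intro x hx
      have hx' : star x ∈ s := hx
      rw [hs] at hx' ⊢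
      obtain ⟨t, ⟨v, rfl⟩, hmem⟩ := hx'
      rw [SetLike.mem_coe] at hmem
      have h2 : star (star x) ∈ SA v := star_mem hmem
      rw [star_star] at h2
      exact Set.mem_iUnion.mpr ⟨v, h2⟩
    have hspan : ∀ x ∈ Submodule.span ℂ (Submonoid.closure s : Set A), τ x = τ' x := by
      intro x hx2
      induction hx2 using Submodule.span_induction with
      | mem y hy => exact hmon y hy
      | zero => simp
      | add y z _ _ hy hz => rw [map_add, map_add, hy, hz]
      | smul r y _ hy => rw [map_smul, map_smul, hy]
    intro x hx
    have hx1 : x ∈ Algebra.adjoin ℂ (s ∪ star s) := hx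
    rw [hstar_s] at hx1
    refine hspan x ?_
    rw [← Algebra.adjoin_eq_span]
    exact hx1
  -- Step 3: continuity and density
  have hcont : Continuous τ :=
    AddMonoidHomClass.continuous_of_bound τ 1 (fun x => by simpa using state_bound τ hτ x)
  have hcont' : Continuous τ' :=
    AddMonoidHomClass.continuous_of_bound τ' 1 (fun x => by simpa using state_bound τ' hτ' x)
  have hdense : Dense (StarAlgebra.adjoin ℂ s : Set A) := by
    rw [dense_iff_closure_eq]
    have : closure (StarAlgebra.adjoin ℂ s : Set A)
        = ((StarAlgebra.adjoin ℂ s).topologicalClosure : Set A) := rfl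
    rw [this, hgen]
    rfl
  have hfun : ⇑τ = ⇑τ' :=
    Continuous.ext_on hdense hcont hcont' (fun x hx => hadj x hx)
  exact LinearMap.ext (fun x => congrFun hfun x)
end
end

section
/- Let S_Γ be the unital C*-subalgebra of O_Γ generated by the semicircular elements s_v = ℓ_v + ℓ_v*, v ∈ V. Then the GNS representation of S_Γ with respect to the restriction of the vacuum state τ_vac is faithful; concretely, the orbit S_Γ·Ω of the vacuum vector is dense in the configuration space H_Γ(C^n). -/
/-!
Write `Ω_w := ℓ_{w₁} ⋯ ℓ_{w_k} Ω` for a word `w`. The Crisp–Laca relations and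
`ℓ_v* Ω = 0` show that `ℓ_v* Ω_w` is either `0` or `Ω_u` for a strictly shorter word `u`.
Hence `Ω_{v :: w} = s_v Ω_w - ℓ_v* Ω_w`, and induction on the length of `w` puts every `Ω_w`
into `S_Γ Ω`. These vectors span a dense subspace, and `S_Γ Ω` is a subspace containing them.

Only these relations between `ℓ_v` and `ℓ_v*` matter, so the word combinatorics is done for
arbitrary families `cr`, `an` in a ring acting on a module.
-/

noncomputable section

section WordVectors

variable {V R M : Type*} [Ring R] [AddCommGroup M] [Module R M]

theorem annihilation_smul_word_eq_zero_or_shorter (Γ : SimpleGraph V) (cr an : V → R)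
    (Ω : M)
    (h_self : ∀ v, an v * cr v = 1)
    (h_adj : ∀ v w, Γ.Adj v w → an w * cr v = cr v * an w)
    (h_nonadj : ∀ v w, v ≠ w → ¬ Γ.Adj v w → an w * cr v = 0)
    (h_vac : ∀ v, an v • Ω = 0) :
    ∀ (w : List V) (v : V), an v • (w.map cr).prod • Ω = 0 ∨
      ∃ u : List V, u.length < w.length ∧
        an v • (w.map cr).prod • Ω = (u.map cr).prod • Ω
  | [], v => .inl (by simpa using h_vac v)
  | a :: w, v => by
    have h_cons :
        an v • ((a :: w).map cr).prod • Ω = (an v * cr a) • (w.map cr).prod • Ω := by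
      simp only [List.map_cons, List.prod_cons, mul_smul]
    by_cases hva : v = a
    · subst hva
      exact .inr ⟨w, by simp, by rw [h_cons, h_self, one_smul]⟩
    by_cases hadj : Γ.Adj v a
    · rw [h_cons, h_adj a v hadj.symm, mul_smul]
      rcases annihilation_smul_word_eq_zero_or_shorter Γ cr an Ω h_self h_adj h_nonadj h_vac w v
        with h_zero | ⟨u, hu, h_eq⟩
      · exact .inl (by rw [h_zero, smul_zero])
      · exact .inr ⟨a :: u, by simpa using hu,
          by simp only [h_eq, List.map_cons, List.prod_cons, mul_smul]⟩
    · exact .inl (by rw [h_cons, h_nonadj a v (Ne.symm hva) (fun h => hadj h.symm), zero_smul])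

theorem exists_mem_subring_smul_eq_word (Γ : SimpleGraph V) (cr an : V → R) (Ω : M)
    (h_self : ∀ v, an v * cr v = 1)
    (h_adj : ∀ v w, Γ.Adj v w → an w * cr v = cr v * an w)
    (h_nonadj : ∀ v w, v ≠ w → ¬ Γ.Adj v w → an w * cr v = 0)
    (h_vac : ∀ v, an v • Ω = 0) (S : Subring R) (hS : ∀ v, cr v + an v ∈ S) :
    ∀ w : List V, ∃ x ∈ S, x • Ω = (w.map cr).prod • Ω
  | [] => ⟨1, S.one_mem, by simp⟩
  | v :: w => by
    obtain ⟨x, hx, hxΩ⟩ :=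
      exists_mem_subring_smul_eq_word Γ cr an Ω h_self h_adj h_nonadj h_vac S hS w
    have h_sx : ((cr v + an v) * x) • Ω
        = ((v :: w).map cr).prod • Ω + an v • (w.map cr).prod • Ω := by
      rw [mul_smul, hxΩ, add_smul, List.map_cons, List.prod_cons, mul_smul]
    rcases annihilation_smul_word_eq_zero_or_shorter Γ cr an Ω h_self h_adj h_nonadj h_vac w v
      with h_zero | ⟨u, hu, h_eq⟩
    · exact ⟨_, mul_mem (hS v) hx, by rw [h_sx, h_zero, add_zero]⟩
    · obtain ⟨y, hy, hyΩ⟩ :=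
        exists_mem_subring_smul_eq_word Γ cr an Ω h_self h_adj h_nonadj h_vac S hS u
      exact ⟨_, sub_mem (mul_mem (hS v) hx) hy,
        by rw [sub_smul, h_sx, h_eq, hyΩ, add_sub_cancel_right]⟩
termination_by w => w.length
decreasing_by all_goals simp only [List.length_cons]; omega

end WordVectors

theorem semicircular_algebra_vacuum_cyclic_general
    {V : Type*} (Γ : SimpleGraph V)
    {H : Type*} [NormedAddCommGroup H] [InnerProductSpace ℂ H] [CompleteSpace H]
    (ℓ : V → H →L[ℂ] H) (Ω : H)
    -- the `ℓ v` are isometries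
    (hiso : ∀ v, star (ℓ v) * ℓ v = 1)
    -- T1
    (hT1b : ∀ v w, Γ.Adj v w → star (ℓ w) * ℓ v = ℓ v * star (ℓ w))
    -- T2
    (hT2 : ∀ v w, v ≠ w → ¬ Γ.Adj v w → star (ℓ w) * ℓ v = 0)
    -- the vacuum vector
    (hann : ∀ v, (star (ℓ v)) Ω = 0)
    -- the images of the pure tensors `e_{v₁} ⊗ ⋯ ⊗ e_{v_k}` span a dense subspace
    (hcyc : Dense
      (Submodule.span ℂ {x : H | ∃ w : List V, ((w.map ℓ).prod) Ω = x} : Set H))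
    -- `S_Γ`, the unital C*-subalgebra of `O_Γ` generated by the `s_v`
    (SΓ : StarSubalgebra ℂ (H →L[ℂ] H))
    (hSΓ : SΓ = (StarAlgebra.adjoin ℂ
      (Set.range fun v : V => ℓ v + star (ℓ v))).topologicalClosure) :
    Dense {x : H | ∃ a ∈ SΓ, a Ω = x} := by
  have h_gen : ∀ v, ℓ v + star (ℓ v) ∈ SΓ.toSubalgebra.toSubring := fun v => by
    rw [hSΓ]
    exact StarSubalgebra.le_topologicalClosure _ (StarAlgebra.subset_adjoin ℂ _ ⟨v, rfl⟩)
  let orbit : Submodule ℂ H :=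
    SΓ.toSubalgebra.toSubmodule.map (ContinuousLinearMap.apply ℂ H Ω).toLinearMap
  have h_words : {x : H | ∃ w : List V, ((w.map ℓ).prod) Ω = x} ⊆ orbit := by
    rintro _ ⟨w, rfl⟩
    exact exists_mem_subring_smul_eq_word Γ ℓ (fun v => star (ℓ v)) Ω hiso hT1b hT2 hann _
      h_gen w
  exact hcyc.mono fun x hx => Submodule.span_le.mpr h_words hx

theorem semicircular_algebra_vacuum_cyclic
    {V : Type*} (Γ : SimpleGraph V)
    {H : Type*} [NormedAddCommGroup H] [InnerProductSpace ℂ H] [CompleteSpace H]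
    (ℓ : V → H →L[ℂ] H) (Ω : H)
    -- the `ℓ v` are isometries
    (hiso : ∀ v, star (ℓ v) * ℓ v = 1)
    -- T1
    (hT1a : ∀ v w, Γ.Adj v w → ℓ w * ℓ v = ℓ v * ℓ w)
    (hT1b : ∀ v w, Γ.Adj v w → star (ℓ w) * ℓ v = ℓ v * star (ℓ w))
    -- T2
    (hT2 : ∀ v w, v ≠ w → ¬ Γ.Adj v w → star (ℓ w) * ℓ v = 0)
    -- the vacuum vector
    (hΩ : ‖Ω‖ = 1) (hann : ∀ v, (star (ℓ v)) Ω = 0)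
    -- the images of the pure tensors `e_{v₁} ⊗ ⋯ ⊗ e_{v_k}` span a dense subspace
    (hcyc : Dense
      (Submodule.span ℂ {x : H | ∃ w : List V, ((w.map ℓ).prod) Ω = x} : Set H))
    -- `S_Γ`, the unital C*-subalgebra of `O_Γ` generated by the `s_v`
    (SΓ : StarSubalgebra ℂ (H →L[ℂ] H))
    (hSΓ : SΓ = (StarAlgebra.adjoin ℂ
      (Set.range fun v : V => ℓ v + star (ℓ v))).topologicalClosure) :
    Dense {x : H | ∃ a ∈ SΓ, a Ω = x} :=
  semicircular_algebra_vacuum_cyclic_general Γ ℓ Ω hiso hT1b hT2 hann hcyc SΓ hSΓ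
end
end

section
/- For every vertex v of Γ and every m ∈ N, the element L_v^{(m)} ∈ End((C^m)^{⊗F}) ⊗ O^V(m) is an isometry: (L_v^{(m)})* L_v^{(m)} = 1. -/
open scoped ENNReal

noncomputable section

/-- Key estimate for `partialIsom`. -/
lemma partialIsom_sum_le {S : Type*} (ρ : S → Option S)
    (hρ : ∀ t t' s, ρ t = some s → ρ t' = some s → t = t')
    (f : lp (fun _ : S => ℂ) 2) (s : Finset S) :
    ∑ t ∈ s, ‖(ρ t).elim 0 (⇑f)‖ ^ (2 : ℝ≥0∞).toReal ≤ ‖f‖ ^ (2 : ℝ≥0∞).toReal := by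
  classical
  have h2 : (0 : ℝ) < (2 : ℝ≥0∞).toReal := by norm_num
  have hsum : Summable fun i : S => ‖f i‖ ^ (2 : ℝ≥0∞).toReal :=
    ((lp.hasSum_norm h2 f).summable)
  set P : S → Prop := fun t => (ρ t).isSome with hP
  have hinj : Set.InjOn (fun t => ((ρ t).getD t)) (s.filter fun t => P t) := by
    intro a ha b hb hab
    simp only [Finset.coe_filter, Set.mem_setOf_eq, hP] at ha hb
    obtain ⟨xa, hxa⟩ := Option.isSome_iff_exists.mp ha.2
    obtain ⟨xb, hxb⟩ := Option.isSome_iff_exists.mp hb.2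
    simp only [hxa, hxb, Option.getD_some] at hab
    subst hab
    exact hρ a b xa hxa hxb
  have h1 : ∑ t ∈ s, ‖(ρ t).elim 0 (⇑f)‖ ^ (2 : ℝ≥0∞).toReal
      = ∑ t ∈ s.filter (fun t => P t), ‖f ((ρ t).getD t)‖ ^ (2 : ℝ≥0∞).toReal := by
    rw [Finset.sum_filter]
    apply Finset.sum_congr rfl
    intro t _
    by_cases hpt : P t
    · obtain ⟨x, hx⟩ := Option.isSome_iff_exists.mp hpt
      simp [hx, if_pos hpt]
    · rw [if_neg hpt]
      have hnone : ρ t = none := Option.not_isSome_iff_eq_none.mp hpt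
      simp [hnone, Real.zero_rpow (ne_of_gt h2)]
  have h2' : ∑ t ∈ s.filter (fun t => P t), ‖f ((ρ t).getD t)‖ ^ (2 : ℝ≥0∞).toReal
      = ∑ u ∈ (s.filter (fun t => P t)).image (fun t => (ρ t).getD t),
          ‖f u‖ ^ (2 : ℝ≥0∞).toReal := by
    rw [Finset.sum_image (fun a ha b hb hab => hinj ha hb hab)]
  rw [h1, h2', lp.norm_rpow_eq_tsum h2 f]
  exact Summable.sum_le_tsum _ (fun i _ => Real.rpow_nonneg (norm_nonneg _) _) hsum

lemma partialIsom_memℓp {S : Type*} (ρ : S → Option S)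
    (hρ : ∀ t t' s, ρ t = some s → ρ t' = some s → t = t')
    (f : lp (fun _ : S => ℂ) 2) :
    Memℓp (fun t => (ρ t).elim 0 (⇑f)) 2 :=
  memℓp_gen' (partialIsom_sum_le ρ hρ f)

/-- The bounded operator on `ℓ²(S)` determined by a "backward map" `ρ`, sending the
standard basis vector `δ_s` to `δ_t` whenever `ρ t = some s`. -/
def partialIsom {S : Type*} (ρ : S → Option S)
    (hρ : ∀ t t' s, ρ t = some s → ρ t' = some s → t = t') :
    lp (fun _ : S => ℂ) 2 →L[ℂ] lp (fun _ : S => ℂ) 2 :=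
  LinearMap.mkContinuous
    { toFun := fun f => ⟨fun t => (ρ t).elim 0 (⇑f), partialIsom_memℓp ρ hρ f⟩
      map_add' := by
        intro f g; apply lp.ext; funext t
        simp only [lp.coeFn_add, Pi.add_apply]
        cases h : ρ t <;> simp [h]
      map_smul' := by
        intro c f; apply lp.ext; funext t
        simp only [lp.coeFn_smul, Pi.smul_apply]
        cases h : ρ t <;> simp [h] }
    1 (by
      intro f
      rw [one_mul]
      have h2 : (0 : ℝ) < (2 : ℝ≥0∞).toReal := by norm_num
      refine lp.norm_le_of_forall_sum_le h2 (norm_nonneg f) (fun s => ?_)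
      calc ∑ i ∈ s, ‖(ρ i).elim 0 (⇑f)‖ ^ (2 : ℝ≥0∞).toReal
          ≤ ‖f‖ ^ (2 : ℝ≥0∞).toReal := partialIsom_sum_le ρ hρ f s)

attribute [local instance] Classical.propDecidable

/-- The set `F` of non-edges of `Γ`: unordered pairs of distinct non-adjacent vertices. -/
def NonEdge {V : Type*} (Γ : SimpleGraph V) : Type _ :=
  {p : Sym2 V // ¬ p.IsDiag ∧ p ∉ Γ.edgeSet}

/-- The set `F(v)` of non-edges of `Γ` containing the vertex `v`. -/
def NonEdgeAt {V : Type*} (Γ : SimpleGraph V) (v : V) : Type _ :=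
  {e : NonEdge Γ // v ∈ e.1}

variable {V : Type*} [Fintype V]

instance (Γ : SimpleGraph V) : Finite (NonEdge Γ) := by
  unfold NonEdge; infer_instance

noncomputable instance (Γ : SimpleGraph V) : Fintype (NonEdge Γ) := Fintype.ofFinite _

instance (Γ : SimpleGraph V) (v : V) : Finite (NonEdgeAt Γ v) := by
  unfold NonEdgeAt; infer_instance

noncomputable instance (Γ : SimpleGraph V) (v : V) : Fintype (NonEdgeAt Γ v) :=
  Fintype.ofFinite _

/-- Full matrix indices for `(ℂ^m)^{⊗F}`. -/
def MIdx (Γ : SimpleGraph V) (m : ℕ) : Type _ := NonEdge Γ → Fin m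

/-- Partial matrix indices `[m]^{F(v)}` for `(ℂ^m)^{⊗F(v)}`. -/
def PIdx (Γ : SimpleGraph V) (v : V) (m : ℕ) : Type _ := NonEdgeAt Γ v → Fin m

noncomputable instance (Γ : SimpleGraph V) (m : ℕ) : Fintype (MIdx Γ m) := by
  unfold MIdx; exact Fintype.ofFinite _

noncomputable instance (Γ : SimpleGraph V) (v : V) (m : ℕ) : Fintype (PIdx Γ v m) := by
  unfold PIdx; exact Fintype.ofFinite _

/-- The generators of the Cuntz–Toeplitz algebra `O_v(m)` are indexed by
`(I, J, ±)` with `I, J ∈ [m]^{F(v)}`; there are `2 m^{2|F(v)|}` of them. -/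
def Letter (Γ : SimpleGraph V) (v : V) (m : ℕ) : Type _ :=
  (PIdx Γ v m × PIdx Γ v m) × Bool

/-- The index set for the standard orthonormal basis of the Hilbert space
`(ℂ^m)^{⊗F} ⊗ (⊗_v Fock(ℂ^{2 m^{2|F(v)|}}))` on which
`End((ℂ^m)^{⊗F}) ⊗ O^V(m)` acts (the minimal tensor product of C*-algebras is
realized spatially on this faithful representation). -/
def FockIdx (Γ : SimpleGraph V) (m : ℕ) : Type _ :=
  MIdx Γ m × (∀ v : V, List (Letter Γ v m))

/-- The Hilbert space carrying `End((ℂ^m)^{⊗F}) ⊗ O^V(m)`. -/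
noncomputable abbrev FockSpace (Γ : SimpleGraph V) (m : ℕ) :=
  lp (fun _ : FockIdx Γ m => ℂ) 2

/-- The matrix unit `ε_{I J} ∈ End((ℂ^m)^{⊗F})`, acting on the Fock side as the
identity. -/
noncomputable def matUnitOp (Γ : SimpleGraph V) (m : ℕ) (I J : MIdx Γ m) :
    FockSpace Γ m →L[ℂ] FockSpace Γ m :=
  partialIsom (fun t => if t.1 = I then some (J, t.2) else none) (by
    intro t t' s ht ht'
    have ht : (if t.1 = I then some (J, t.2) else none) = some s := ht
    have ht' : (if t'.1 = I then some (J, t'.2) else none) = some s := ht'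
    by_cases h : t.1 = I
    · by_cases h' : t'.1 = I
      · rw [if_pos h] at ht; rw [if_pos h'] at ht'
        have hts := Option.some.inj (ht.trans ht'.symm)
        have h2 : t.2 = t'.2 := (Prod.ext_iff.mp hts).2
        exact Prod.ext (h.trans h'.symm) h2
      · rw [if_neg h'] at ht'; exact absurd ht' (by simp)
    · rw [if_neg h] at ht; exact absurd ht (by simp))

/-- The creation operator `x^{v}_{a}` of the letter `a` in the Cuntz–Toeplitz factor
`O_v(m)`, acting on all other tensor factors as the identity. -/
noncomputable def creationOp (Γ : SimpleGraph V) (m : ℕ) (v : V) (a : Letter Γ v m) :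
    FockSpace Γ m →L[ℂ] FockSpace Γ m :=
  partialIsom
    (fun t => if (t.2 v).head? = some a
      then some (t.1, Function.update t.2 v (t.2 v).tail) else none)
    (by
      intro t t' s ht ht'
      have ht : (if (t.2 v).head? = some a
          then some (t.1, Function.update t.2 v (t.2 v).tail) else none) = some s := ht
      have ht' : (if (t'.2 v).head? = some a
          then some (t'.1, Function.update t'.2 v (t'.2 v).tail) else none) = some s := ht'
      have key : ∀ u : FockIdx Γ m, (u.2 v).head? = some a →
          (u.1, Function.update u.2 v (u.2 v).tail) = s →
          u = (s.1, Function.update s.2 v (a :: s.2 v)) := by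
        intro u hu hs
        have h1 : u.1 = s.1 := by rw [← hs]
        have h2 : Function.update u.2 v (u.2 v).tail = s.2 := by rw [← hs]
        have hcons : u.2 v = a :: (u.2 v).tail := by
          cases hl : u.2 v with
          | nil => rw [hl] at hu; simp at hu
          | cons b r =>
            rw [hl] at hu
            simp only [List.head?_cons, Option.some.injEq] at hu
            rw [hu]
            simp
        have h3 : u.2 = Function.update s.2 v (a :: s.2 v) := by
          funext w
          by_cases hw : w = v
          · subst hw
            rw [Function.update_self, ← h2, Function.update_self]
            exact hcons
          · rw [Function.update_of_ne hw, ← h2, Function.update_of_ne hw]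
        exact Prod.ext h1 h3
      by_cases h : (t.2 v).head? = some a
      · by_cases h' : (t'.2 v).head? = some a
        · rw [if_pos h] at ht; rw [if_pos h'] at ht'
          have e1 := key t h (Option.some.inj ht)
          have e2 := key t' h' (Option.some.inj ht')
          rw [e1, e2]
        · rw [if_neg h'] at ht'; exact absurd ht' (by simp)
      · rw [if_neg h] at ht; exact absurd ht (by simp))

/-- Extension of a partial index `I ∈ [m]^{F(v)}` by an index `h` on the complementary
channels. -/
noncomputable def extendIdx (Γ : SimpleGraph V) (m : ℕ) (v : V) (I : PIdx Γ v m)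
    (h : {e : NonEdge Γ // ¬ v ∈ e.1} → Fin m) : MIdx Γ m :=
  fun e => if he : v ∈ e.1 then I ⟨e, he⟩ else h ⟨e, he⟩

/-- The operator `ε_{I J} ⊗ id ∈ End((ℂ^m)^{⊗F(v)}) ⊗ End((ℂ^m)^{⊗F∖F(v)})
= End((ℂ^m)^{⊗F})` for partial indices `I, J ∈ [m]^{F(v)}`. -/
noncomputable def partialMatOp (Γ : SimpleGraph V) (m : ℕ) (v : V) (I J : PIdx Γ v m) :
    FockSpace Γ m →L[ℂ] FockSpace Γ m :=
  ∑ h : {e : NonEdge Γ // ¬ v ∈ e.1} → Fin m,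
    matUnitOp Γ m (extendIdx Γ m v I h) (extendIdx Γ m v J h)

/-- `r⁺_{I J} = ε_{I J} + ε_{J I}`. -/
noncomputable def rPlusOp (Γ : SimpleGraph V) (m : ℕ) (v : V) (I J : PIdx Γ v m) :
    FockSpace Γ m →L[ℂ] FockSpace Γ m :=
  partialMatOp Γ m v I J + partialMatOp Γ m v J I

/-- `r⁻_{I J} = i (ε_{I J} − ε_{J I})`. -/
noncomputable def rMinusOp (Γ : SimpleGraph V) (m : ℕ) (v : V) (I J : PIdx Γ v m) :
    FockSpace Γ m →L[ℂ] FockSpace Γ m :=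
  (Complex.I) • (partialMatOp Γ m v I J - partialMatOp Γ m v J I)

/-- The operator
`L_v^{(m)} = (2 √(m^{|F(v)|}))⁻¹ ⬝ Σ_{I,J ∈ [m]^{F(v)}} (r⁺_{IJ} ⊗ x^{v+}_{IJ} + r⁻_{IJ} ⊗ x^{v−}_{IJ})`
in `End((ℂ^m)^{⊗F}) ⊗ O^V(m)`, realized on the Fock representation. -/
noncomputable def Lop (Γ : SimpleGraph V) (m : ℕ) (v : V) :
    FockSpace Γ m →L[ℂ] FockSpace Γ m :=
  (((1 : ℝ) / (2 * Real.sqrt ((m : ℝ) ^ (Fintype.card (NonEdgeAt Γ v)))) : ℝ) : ℂ) •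
    ∑ I : PIdx Γ v m, ∑ J : PIdx Γ v m,
      (rPlusOp Γ m v I J * creationOp Γ m v ((I, J), true) +
        rMinusOp Γ m v I J * creationOp Γ m v ((I, J), false))

/-! ### Auxiliary lemmas for `Lop_isometry` -/

section Aux

open ContinuousLinearMap

lemma partialIsom_apply {S : Type*} (ρ : S → Option S)
    (hρ : ∀ t t' s, ρ t = some s → ρ t' = some s → t = t')
    (f : lp (fun _ : S => ℂ) 2) (t : S) :
    (partialIsom ρ hρ f) t = (ρ t).elim 0 (⇑f) := rfl

lemma partialIsom_mul_apply {S : Type*} (ρ σ : S → Option S)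
    (hρ : ∀ t t' s, ρ t = some s → ρ t' = some s → t = t')
    (hσ : ∀ t t' s, σ t = some s → σ t' = some s → t = t')
    (f : lp (fun _ : S => ℂ) 2) (t : S) :
    ((partialIsom ρ hρ * partialIsom σ hσ) f) t = ((ρ t).bind σ).elim 0 (⇑f) := by
  rw [ContinuousLinearMap.mul_apply, partialIsom_apply]
  cases h : ρ t with
  | none => simp
  | some s => simp [partialIsom_apply]

/-- Duality: if `ρ t = some s ↔ σ s = some t` then `partialIsom σ` is the adjoint of
`partialIsom ρ`. -/
lemma partialIsom_adjoint {S : Type*} (ρ σ : S → Option S)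
    (hρ : ∀ t t' s, ρ t = some s → ρ t' = some s → t = t')
    (hσ : ∀ t t' s, σ t = some s → σ t' = some s → t = t')
    (hd : ∀ t s, ρ t = some s ↔ σ s = some t) :
    ContinuousLinearMap.adjoint (partialIsom ρ hρ) = partialIsom σ hσ := by
  symm
  rw [ContinuousLinearMap.eq_adjoint_iff]
  intro x y
  rw [lp.inner_eq_tsum, lp.inner_eq_tsum]
  simp only [RCLike.inner_apply, partialIsom_apply]
  -- LHS sum over s : conj ((σ s).elim 0 x) * y s ; RHS sum over t : conj (x t) * (ρ t).elim 0 y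
  refine tsum_eq_tsum_of_ne_zero_bij
    (fun t => (ρ t.1).get (by
      rcases t with ⟨t, ht⟩
      cases h : ρ t with
      | none => simp [h, Function.mem_support] at ht
      | some s => simp [h])) ?_ ?_ ?_
  · rintro ⟨t, ht⟩ ⟨t', ht'⟩ h
    cases h1 : ρ t with
    | none => exfalso; apply ht; simp [Function.mem_support, h1]
    | some s =>
      cases h2 : ρ t' with
      | none => exfalso; apply ht'; simp [Function.mem_support, h2]
      | some s' =>
        simp only [h1, h2, Option.get_some] at h
        subst h
        exact Subtype.ext (hρ t t' s h1 h2)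
  · -- support of LHS ⊆ range
    intro s hs
    simp only [Function.mem_support] at hs
    cases h1 : σ s with
    | none => exfalso; apply hs; simp [h1]
    | some t =>
      have hρt : ρ t = some s := (hd t s).mpr h1
      refine ⟨⟨t, ?_⟩, ?_⟩
      · simp only [Function.mem_support, hρt, Option.elim_some]
        simp only [h1, Option.elim_some] at hs
        exact hs
      · simp [hρt]
  · rintro ⟨t, ht⟩
    rcases Option.eq_none_or_eq_some (ρ t) with h1 | ⟨s, h1⟩
    · exfalso; apply ht; simp [Function.mem_support, h1]
    · have hσs : σ s = some t := (hd t s).mp h1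
      simp [h1, hσs]

end Aux

section OpLemmas

set_option linter.unusedSectionVars false

variable (Γ : SimpleGraph V) (m : ℕ) (v : V)

lemma matUnitOp_adjoint (I J : MIdx Γ m) :
    ContinuousLinearMap.adjoint (matUnitOp Γ m I J) = matUnitOp Γ m J I := by
  unfold matUnitOp
  apply partialIsom_adjoint
  intro t s
  constructor
  · intro h
    by_cases h1 : t.1 = I
    · rw [if_pos h1] at h
      obtain rfl := Option.some.inj h
      rw [if_pos rfl]
      exact congrArg some (Prod.ext h1.symm rfl)
    · rw [if_neg h1] at h; exact absurd h (by simp)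
  · intro h
    by_cases h1 : s.1 = J
    · rw [if_pos h1] at h
      obtain rfl := Option.some.inj h
      rw [if_pos rfl]
      exact congrArg some (Prod.ext h1.symm rfl)
    · rw [if_neg h1] at h; exact absurd h (by simp)

lemma matUnitOp_mul (I J K L : MIdx Γ m) :
    matUnitOp Γ m I J * matUnitOp Γ m K L =
      if J = K then matUnitOp Γ m I L else 0 := by
  by_cases hJK : J = K
  · subst hJK
    rw [if_pos rfl]
    ext f t
    unfold matUnitOp
    rw [partialIsom_mul_apply, partialIsom_apply]
    by_cases h1 : t.1 = I <;> simp [h1, Option.bind, Option.elim]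
  · rw [if_neg hJK]
    ext f t
    unfold matUnitOp
    rw [partialIsom_mul_apply]
    by_cases h1 : t.1 = I <;> simp [h1, hJK, Option.bind, Option.elim]

lemma matUnitOp_sum : ∑ K : MIdx Γ m, matUnitOp Γ m K K = 1 := by
  ext f t
  rw [ContinuousLinearMap.sum_apply, lp.coeFn_sum, Finset.sum_apply,
    ContinuousLinearMap.one_apply]
  have h : ∀ K : MIdx Γ m, (matUnitOp Γ m K K f) t
      = if t.1 = K then f (K, t.2) else 0 := by
    intro K
    unfold matUnitOp
    rw [partialIsom_apply]
    by_cases h1 : t.1 = K <;> simp [h1, Option.elim]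
  simp_rw [h]
  rw [Finset.sum_ite_eq]
  simp; rfl

/-- The annihilation operator, adjoint to `creationOp`. -/
noncomputable def annihOp (a : Letter Γ v m) :
    FockSpace Γ m →L[ℂ] FockSpace Γ m :=
  partialIsom (fun s => some (s.1, Function.update s.2 v (a :: s.2 v))) (by
    intro t t' s ht ht'
    rw [← ht'] at ht
    replace ht := Option.some.inj ht
    obtain ⟨h1, h2⟩ := Prod.ext_iff.mp ht
    refine Prod.ext h1 ?_
    funext w
    by_cases hw : w = v
    · subst hw
      have hv := congrFun h2 w
      simp only [Function.update_self] at hv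
      simpa using hv
    · have hv := congrFun h2 w
      simp only [Function.update_of_ne hw] at hv
      simpa using hv)

lemma creationOp_adjoint (a : Letter Γ v m) :
    ContinuousLinearMap.adjoint (creationOp Γ m v a) = annihOp Γ m v a := by
  unfold creationOp annihOp
  apply partialIsom_adjoint
  intro t s
  constructor
  · intro h
    by_cases h1 : (t.2 v).head? = some a
    · rw [if_pos h1] at h
      obtain rfl := Option.some.inj h
      refine congrArg some (Prod.ext rfl ?_)
      have hcons : a :: (t.2 v).tail = t.2 v := by
        cases hl : t.2 v with
        | nil => rw [hl] at h1; simp at h1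
        | cons b r =>
          rw [hl] at h1
          simp only [List.head?_cons, Option.some.injEq] at h1
          rw [h1]
          rfl
      simp only [Function.update_self]
      rw [hcons, Function.update_idem, Function.update_eq_self]
    · rw [if_neg h1] at h; exact absurd h (by simp)
  · intro h
    obtain rfl := Option.some.inj h
    simp [Function.update_self, Function.update_idem, Function.update_eq_self]; rfl

lemma annih_mul_creation (a b : Letter Γ v m) :
    annihOp Γ m v a * creationOp Γ m v b = if a = b then 1 else 0 := by
  by_cases hab : a = b
  · subst hab
    rw [if_pos rfl]
    ext f t
    unfold annihOp creationOp
    rw [partialIsom_mul_apply, ContinuousLinearMap.one_apply]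
    simp [Function.update_self, Function.update_idem, Function.update_eq_self, Option.bind, Option.elim]; rfl
  · rw [if_neg hab]
    ext f t
    unfold annihOp creationOp
    rw [partialIsom_mul_apply]
    simp [Function.update_self, hab, Option.bind, Option.elim]

lemma matUnit_creation_comm (I J : MIdx Γ m) (a : Letter Γ v m) :
    matUnitOp Γ m I J * creationOp Γ m v a = creationOp Γ m v a * matUnitOp Γ m I J := by
  ext f t
  unfold matUnitOp creationOp
  rw [partialIsom_mul_apply, partialIsom_mul_apply]
  by_cases h1 : t.1 = I <;> by_cases h2 : (t.2 v).head? = some a <;> simp [h1, h2, Option.bind, Option.elim]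

lemma extendIdx_inj (I K : PIdx Γ v m) (h h' : {e : NonEdge Γ // ¬ v ∈ e.1} → Fin m)
    (heq : extendIdx Γ m v I h = extendIdx Γ m v K h') : I = K ∧ h = h' := by
  constructor
  · funext x
    have hx := congrFun heq x.1
    unfold extendIdx at hx
    rw [dif_pos x.2, dif_pos x.2] at hx
    exact hx
  · funext x
    have hx := congrFun heq x.1
    unfold extendIdx at hx
    rw [dif_neg x.2, dif_neg x.2] at hx
    exact hx

lemma partialMatOp_adjoint (I J : PIdx Γ v m) :
    ContinuousLinearMap.adjoint (partialMatOp Γ m v I J) = partialMatOp Γ m v J I := by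
  unfold partialMatOp
  rw [map_sum]
  exact Finset.sum_congr rfl fun h _ => matUnitOp_adjoint Γ m _ _

lemma partialMatOp_mul (I J K L : PIdx Γ v m) :
    partialMatOp Γ m v I J * partialMatOp Γ m v K L =
      if J = K then partialMatOp Γ m v I L else 0 := by
  unfold partialMatOp
  rw [Finset.sum_mul_sum]
  by_cases hJK : J = K
  · subst hJK
    rw [if_pos rfl]
    refine Finset.sum_congr rfl fun h _ => ?_
    have step : ∀ h' : {e : NonEdge Γ // ¬ v ∈ e.1} → Fin m,
        matUnitOp Γ m (extendIdx Γ m v I h) (extendIdx Γ m v J h) *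
          matUnitOp Γ m (extendIdx Γ m v J h') (extendIdx Γ m v L h') =
        if h' = h then matUnitOp Γ m (extendIdx Γ m v I h) (extendIdx Γ m v L h') else 0 := by
      intro h'
      rw [matUnitOp_mul]
      congr 1
      simp only [eq_iff_iff]
      constructor
      · intro e; exact ((extendIdx_inj Γ m v J J h h' e).2).symm
      · intro e; rw [e]
    rw [Finset.sum_congr rfl fun h' _ => step h', Finset.sum_ite_eq' Finset.univ]
    simp
  · rw [if_neg hJK]
    refine Finset.sum_eq_zero fun h _ => Finset.sum_eq_zero fun h' _ => ?_
    rw [matUnitOp_mul, if_neg fun e => hJK (extendIdx_inj Γ m v J K h h' e).1]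

/-- `extendIdx` as an equivalence. -/
noncomputable def extendEquiv :
    (PIdx Γ v m × ({e : NonEdge Γ // ¬ v ∈ e.1} → Fin m)) ≃ MIdx Γ m where
  toFun p := extendIdx Γ m v p.1 p.2
  invFun K := (fun x => K x.1, fun x => K x.1)
  left_inv p := by
    refine Prod.ext ?_ ?_
    · funext x
      show extendIdx Γ m v p.1 p.2 x.1 = _
      unfold extendIdx
      rw [dif_pos x.2]
      rfl
    · funext x
      show extendIdx Γ m v p.1 p.2 x.1 = _
      unfold extendIdx
      rw [dif_neg x.2]
  right_inv K := by
    funext e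
    show extendIdx Γ m v _ _ e = K e
    unfold extendIdx
    by_cases he : v ∈ e.1
    · rw [dif_pos he]
    · rw [dif_neg he]

lemma partialMatOp_sum : ∑ I : PIdx Γ v m, partialMatOp Γ m v I I = 1 := by
  unfold partialMatOp
  rw [← Fintype.sum_prod_type']
  rw [show (∑ p : PIdx Γ v m × ({e : NonEdge Γ // ¬ v ∈ e.1} → Fin m),
      matUnitOp Γ m (extendIdx Γ m v p.1 p.2) (extendIdx Γ m v p.1 p.2))
    = ∑ p : PIdx Γ v m × ({e : NonEdge Γ // ¬ v ∈ e.1} → Fin m),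
      matUnitOp Γ m (extendEquiv Γ m v p) (extendEquiv Γ m v p) from rfl]
  rw [Equiv.sum_comp (extendEquiv Γ m v) (fun K => matUnitOp Γ m K K)]
  exact matUnitOp_sum Γ m

lemma partialMatOp_creation_comm (I J : PIdx Γ v m) (a : Letter Γ v m) :
    partialMatOp Γ m v I J * creationOp Γ m v a
      = creationOp Γ m v a * partialMatOp Γ m v I J := by
  unfold partialMatOp
  rw [Finset.sum_mul, Finset.mul_sum]
  exact Finset.sum_congr rfl fun h _ => matUnit_creation_comm Γ m v _ _ a

end OpLemmas

set_option maxHeartbeats 2000000 in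
/-- **Lemma (isometry).** Each `L_v^{(m)}` is an isometry: `(L_v^{(m)})^* L_v^{(m)} = 1`. -/
theorem Lop_isometry {V : Type*} [Fintype V] (Γ : SimpleGraph V) (m : ℕ) (hm : 0 < m)
    (v : V) :
    star (Lop Γ m v) * Lop Γ m v = 1 := by
  classical
  set d := Fintype.card (NonEdgeAt Γ v) with hd
  set c : ℂ := (((1 : ℝ) / (2 * Real.sqrt ((m : ℝ) ^ d)) : ℝ) : ℂ) with hc
  set N := Fintype.card (PIdx Γ v m) with hN
  -- basic relations
  have hxx : ∀ a b : Letter Γ v m, star (creationOp Γ m v a) * creationOp Γ m v b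
      = if a = b then 1 else 0 := fun a b => by
    rw [ContinuousLinearMap.star_eq_adjoint, creationOp_adjoint, annih_mul_creation]
  have hPadj : ∀ I J, star (partialMatOp Γ m v I J) = partialMatOp Γ m v J I := fun I J => by
    rw [ContinuousLinearMap.star_eq_adjoint, partialMatOp_adjoint]
  have hXP : ∀ (a : Letter Γ v m) (I J : PIdx Γ v m),
      star (creationOp Γ m v a) * partialMatOp Γ m v I J
        = partialMatOp Γ m v I J * star (creationOp Γ m v a) := by
    intro a I J
    have h := congrArg star (partialMatOp_creation_comm Γ m v J I a)
    rw [star_mul, star_mul, hPadj] at h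
    exact h
  have hRpadj : ∀ I J, star (rPlusOp Γ m v I J) = rPlusOp Γ m v I J := by
    intro I J
    unfold rPlusOp
    rw [star_add, hPadj, hPadj, add_comm]
  have hRmadj : ∀ I J, star (rMinusOp Γ m v I J) = rMinusOp Γ m v I J := by
    intro I J
    unfold rMinusOp
    rw [star_smul, star_sub, hPadj, hPadj]
    rw [RCLike.star_def, Complex.conj_I, neg_smul, ← smul_neg, neg_sub]
  have hXRp : ∀ (a : Letter Γ v m) (I J : PIdx Γ v m),
      star (creationOp Γ m v a) * rPlusOp Γ m v I J
        = rPlusOp Γ m v I J * star (creationOp Γ m v a) := by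
    intro a I J
    unfold rPlusOp
    rw [mul_add, add_mul, hXP, hXP]
  have hXRm : ∀ (a : Letter Γ v m) (I J : PIdx Γ v m),
      star (creationOp Γ m v a) * rMinusOp Γ m v I J
        = rMinusOp Γ m v I J * star (creationOp Γ m v a) := by
    intro a I J
    unfold rMinusOp
    rw [mul_smul_comm, smul_mul_assoc, mul_sub, sub_mul, hXP, hXP]
  have hRsq : ∀ I J : PIdx Γ v m, rPlusOp Γ m v I J * rPlusOp Γ m v I J
      + rMinusOp Γ m v I J * rMinusOp Γ m v I J
      = (partialMatOp Γ m v I I + partialMatOp Γ m v J J)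
        + (partialMatOp Γ m v I I + partialMatOp Γ m v J J) := by
    intro I J
    have hm1 : rMinusOp Γ m v I J * rMinusOp Γ m v I J
        = -((partialMatOp Γ m v I J - partialMatOp Γ m v J I) *
            (partialMatOp Γ m v I J - partialMatOp Γ m v J I)) := by
      unfold rMinusOp
      rw [smul_mul_assoc, mul_smul_comm, smul_smul, Complex.I_mul_I, neg_one_smul]
    have expand : ∀ A B : FockSpace Γ m →L[ℂ] FockSpace Γ m,
        (A + B) * (A + B) - (A - B) * (A - B) = (A * B + B * A) + (A * B + B * A) := by
      intro A B; noncomm_ring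
    rw [hm1]
    unfold rPlusOp
    rw [← sub_eq_add_neg, expand, partialMatOp_mul, partialMatOp_mul, if_pos rfl, if_pos rfl]
  -- the single key computation for a pair of summands
  have key0 : ∀ (a b : Letter Γ v m) (R₁ R₂ : FockSpace Γ m →L[ℂ] FockSpace Γ m),
      star (creationOp Γ m v a) * R₁ = R₁ * star (creationOp Γ m v a) →
      star (creationOp Γ m v a) * R₂ = R₂ * star (creationOp Γ m v a) →
      (star (creationOp Γ m v a) * R₁) * (R₂ * creationOp Γ m v b)
        = if a = b then R₁ * R₂ else 0 := by
    intro a b R₁ R₂ h₁ h₂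
    calc (star (creationOp Γ m v a) * R₁) * (R₂ * creationOp Γ m v b)
        = (R₁ * star (creationOp Γ m v a)) * (R₂ * creationOp Γ m v b) := by rw [h₁]
      _ = R₁ * ((star (creationOp Γ m v a) * R₂) * creationOp Γ m v b) := by
          noncomm_ring
      _ = R₁ * ((R₂ * star (creationOp Γ m v a)) * creationOp Γ m v b) := by rw [h₂]
      _ = (R₁ * R₂) * (star (creationOp Γ m v a) * creationOp Γ m v b) := by
          noncomm_ring
      _ = (R₁ * R₂) * (if a = b then 1 else 0) := by rw [hxx]
      _ = if a = b then R₁ * R₂ else 0 := by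
          by_cases hab : a = b
          · rw [if_pos hab, if_pos hab, mul_one]
          · rw [if_neg hab, if_neg hab, mul_zero]
  -- termwise computation
  have hTT : ∀ p q : PIdx Γ v m × PIdx Γ v m,
      star (rPlusOp Γ m v q.1 q.2 * creationOp Γ m v ((q.1, q.2), true)
            + rMinusOp Γ m v q.1 q.2 * creationOp Γ m v ((q.1, q.2), false))
        * (rPlusOp Γ m v p.1 p.2 * creationOp Γ m v ((p.1, p.2), true)
            + rMinusOp Γ m v p.1 p.2 * creationOp Γ m v ((p.1, p.2), false))
      = if q = p then
          (partialMatOp Γ m v p.1 p.1 + partialMatOp Γ m v p.2 p.2)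
            + (partialMatOp Γ m v p.1 p.1 + partialMatOp Γ m v p.2 p.2)
        else 0 := by
    intro p q
    rw [star_add, star_mul, star_mul, hRpadj, hRmadj, add_mul, mul_add, mul_add,
      key0 ((q.1, q.2), true) ((p.1, p.2), true) _ _ (hXRp _ _ _) (hXRp _ _ _),
      key0 ((q.1, q.2), true) ((p.1, p.2), false) _ _ (hXRp _ _ _) (hXRm _ _ _),
      key0 ((q.1, q.2), false) ((p.1, p.2), true) _ _ (hXRm _ _ _) (hXRp _ _ _),
      key0 ((q.1, q.2), false) ((p.1, p.2), false) _ _ (hXRm _ _ _) (hXRm _ _ _)]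
    by_cases hqp : q = p
    · subst hqp
      refine Eq.trans ?_ ((hRsq q.1 q.2).trans (if_pos rfl).symm)
      congr 1
      · exact (congrArg₂ (· + ·) (if_pos rfl)
          (if_neg (by intro h; exact Bool.noConfusion (congrArg Prod.snd h)))).trans (add_zero _)
      · exact (congrArg₂ (· + ·) (if_neg (by intro h; exact Bool.noConfusion (congrArg Prod.snd h)))
          (if_pos rfl)).trans (zero_add _)
    · have h1 : ¬ (((q.1, q.2), true) = ((p.1, p.2), true)) := fun h =>
        hqp ((Prod.ext_iff.mp h).1)
      have h2 : ¬ (((q.1, q.2), false) = ((p.1, p.2), false)) := fun h =>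
        hqp ((Prod.ext_iff.mp h).1)
      refine Eq.trans (congrArg₂ (· + ·)
        (congrArg₂ (· + ·) (if_neg (by exact h1))
          (if_neg (by intro h; exact Bool.noConfusion (congrArg Prod.snd h))))
        (congrArg₂ (· + ·) (if_neg (by intro h; exact Bool.noConfusion (congrArg Prod.snd h)))
          (if_neg (by exact h2)))) ?_
      rw [if_neg hqp]
      simp
  -- rewrite Lop as a sum over pairs
  have hL : Lop Γ m v = c • ∑ p : PIdx Γ v m × PIdx Γ v m,
      (rPlusOp Γ m v p.1 p.2 * creationOp Γ m v ((p.1, p.2), true)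
        + rMinusOp Γ m v p.1 p.2 * creationOp Γ m v ((p.1, p.2), false)) := by
    rw [hc]
    unfold Lop
    rw [Fintype.sum_prod_type]
  have hstarc : star c = c := by
    rw [hc, RCLike.star_def, Complex.conj_ofReal]
  -- the big sum
  have hsum : ∑ q : PIdx Γ v m × PIdx Γ v m,
      ((partialMatOp Γ m v q.1 q.1 + partialMatOp Γ m v q.2 q.2)
        + (partialMatOp Γ m v q.1 q.1 + partialMatOp Γ m v q.2 q.2))
      = ((4 : ℂ) * (N : ℂ)) • (1 : FockSpace Γ m →L[ℂ] FockSpace Γ m) := by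
    rw [Fintype.sum_prod_type]
    have inner : ∀ I : PIdx Γ v m, ∑ J : PIdx Γ v m,
        ((partialMatOp Γ m v I I + partialMatOp Γ m v J J)
          + (partialMatOp Γ m v I I + partialMatOp Γ m v J J))
        = ((N : ℂ) • partialMatOp Γ m v I I + 1) + ((N : ℂ) • partialMatOp Γ m v I I + 1) := by
      intro I
      rw [Finset.sum_add_distrib, Finset.sum_add_distrib, Finset.sum_const,
        Finset.card_univ, partialMatOp_sum]
      simp only [← Nat.cast_smul_eq_nsmul ℂ]
      rfl
    rw [Finset.sum_congr rfl fun I _ => inner I]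
    simp only [Finset.sum_add_distrib]
    simp only [← Finset.smul_sum]
    rw [partialMatOp_sum, Finset.sum_const, Finset.card_univ]
    simp only [← Nat.cast_smul_eq_nsmul ℂ]
    rw [← hN, ← add_smul, ← add_smul]
    congr 1
    ring
  -- the scalar
  have hq : (0 : ℝ) < (m : ℝ) ^ d := pow_pos (by exact_mod_cast hm) d
  have hscalar : (c * c) * ((4 : ℂ) * (N : ℂ)) = 1 := by
    have hcard : N = m ^ d := by
      rw [hN, show Fintype.card (PIdx Γ v m) = Fintype.card (NonEdgeAt Γ v → Fin m) from
        Fintype.card_congr (Equiv.cast rfl), Fintype.card_fun, Fintype.card_fin]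
    have hNr : (N : ℂ) = (((m : ℝ) ^ d : ℝ) : ℂ) := by
      rw [hcard]; push_cast; ring
    rw [hc, hNr, show ((4 : ℂ)) = (((4 : ℝ)) : ℂ) by norm_num,
      ← Complex.ofReal_mul, ← Complex.ofReal_mul, ← Complex.ofReal_mul,
      Complex.ofReal_eq_one]
    have hs : Real.sqrt ((m : ℝ) ^ d) * Real.sqrt ((m : ℝ) ^ d) = (m : ℝ) ^ d :=
      Real.mul_self_sqrt hq.le
    have hs0 : Real.sqrt ((m : ℝ) ^ d) ≠ 0 := by positivity
    field_simp
    nlinarith [hs, hq]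
  -- assemble
  calc star (Lop Γ m v) * Lop Γ m v
      = (star c • star (∑ p : PIdx Γ v m × PIdx Γ v m,
          (rPlusOp Γ m v p.1 p.2 * creationOp Γ m v ((p.1, p.2), true)
            + rMinusOp Γ m v p.1 p.2 * creationOp Γ m v ((p.1, p.2), false))))
        * (c • ∑ p : PIdx Γ v m × PIdx Γ v m,
          (rPlusOp Γ m v p.1 p.2 * creationOp Γ m v ((p.1, p.2), true)
            + rMinusOp Γ m v p.1 p.2 * creationOp Γ m v ((p.1, p.2), false))) := by
        rw [hL, star_smul]
    _ = (c * c) • ((∑ q : PIdx Γ v m × PIdx Γ v m,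
          star (rPlusOp Γ m v q.1 q.2 * creationOp Γ m v ((q.1, q.2), true)
            + rMinusOp Γ m v q.1 q.2 * creationOp Γ m v ((q.1, q.2), false)))
        * (∑ p : PIdx Γ v m × PIdx Γ v m,
          (rPlusOp Γ m v p.1 p.2 * creationOp Γ m v ((p.1, p.2), true)
            + rMinusOp Γ m v p.1 p.2 * creationOp Γ m v ((p.1, p.2), false)))) := by
        rw [hstarc, star_sum, smul_mul_assoc, mul_smul_comm, smul_smul]
    _ = (c * c) • (∑ q : PIdx Γ v m × PIdx Γ v m, ∑ p : PIdx Γ v m × PIdx Γ v m,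
          star (rPlusOp Γ m v q.1 q.2 * creationOp Γ m v ((q.1, q.2), true)
            + rMinusOp Γ m v q.1 q.2 * creationOp Γ m v ((q.1, q.2), false))
          * (rPlusOp Γ m v p.1 p.2 * creationOp Γ m v ((p.1, p.2), true)
            + rMinusOp Γ m v p.1 p.2 * creationOp Γ m v ((p.1, p.2), false))) := by
        rw [Finset.sum_mul_sum]
    _ = (c * c) • (∑ q : PIdx Γ v m × PIdx Γ v m,
          ((partialMatOp Γ m v q.1 q.1 + partialMatOp Γ m v q.2 q.2)
            + (partialMatOp Γ m v q.1 q.1 + partialMatOp Γ m v q.2 q.2))) := by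
        congr 1
        refine Finset.sum_congr rfl fun q _ => ?_
        rw [Finset.sum_congr rfl fun p _ => hTT p q]
        rw [Finset.sum_ite_eq]
        simp
    _ = (c * c) • (((4 : ℂ) * (N : ℂ)) • (1 : FockSpace Γ m →L[ℂ] FockSpace Γ m)) := by
        rw [hsum]
    _ = ((c * c) * ((4 : ℂ) * (N : ℂ))) • (1 : FockSpace Γ m →L[ℂ] FockSpace Γ m) := by
        rw [smul_smul]
    _ = 1 := by rw [hscalar, one_smul]
end
end
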